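/- arXiv:2505.04039 — 2 statements merged into one kernel-verified Lean document; each statement's English description precedes it below -/
import Mathlib

section
/- For every s ≥ 0 and every variable x_{i,j} (1 ≤ i ≤ n−1, 1 ≤ j ≤ v_i), the degree of Φ_s(x,z,q) in the variable x_{i,j} is strictly less than (v_i + 1)·p^s − 1. -/
open MvPolynomial Finset

/-- Dimension vector of the framed `A_{n-1}` quiver: `v i = min(i, k, n - i)`. -/
def dimv (k n i : ℕ) : ℕ := min i (min k (n - i))

/-- `c_s = (p^s - 1)·ω` where `ω = r₀/q₀` (an integer under the standing hypotheses). -/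
def cExp (p r₀ q₀ s : ℕ) : ℕ := (p ^ s - 1) * r₀ / q₀

/-- `a_s = (p^s - 1)·(1 - ω)`. -/
def aExp (p r₀ q₀ s : ℕ) : ℕ := (p ^ s - 1) - cExp p r₀ q₀ s

/-- `b_s = (p^s - 1)·(1 - 2ω)/2`. -/
def bExp (p r₀ q₀ s : ℕ) : ℕ := (p ^ s - 1 - 2 * cExp p r₀ q₀ s) / 2

/-- The coefficient ring `ℤ[z,q]`, with `z = X false` and `q = X true`. -/
abbrev Zq : Type := MvPolynomial Bool ℤ

noncomputable def Zvar : Zq := MvPolynomial.X false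
noncomputable def Qvar : Zq := MvPolynomial.X true

/-- The superpotential factor `Φ̄_s(x, z, q)`, a polynomial in the variables
`x_{i,j}` (indexed by pairs `(i,j) : ℕ × ℕ`) with coefficients in `ℤ[z,q]`. -/
noncomputable def Phibar (p r₀ q₀ k n s : ℕ) : MvPolynomial (ℕ × ℕ) Zq :=
  (∏ m ∈ Icc 1 (n - 1), ∏ j ∈ Icc 1 (dimv k n m), X (m, j)) ^ aExp p r₀ q₀ s *
  (∏ m ∈ Icc 1 (n - 1),
    ∏ ij ∈ ((Icc 1 (dimv k n m)) ×ˢ (Icc 1 (dimv k n m))).filter (fun ij => ij.1 ≠ ij.2),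
      ∏ r ∈ range (bExp p r₀ q₀ s), (X (m, ij.1) - C (Qvar ^ r) * X (m, ij.2))) *
  (∏ i ∈ Icc 1 (n - 2), ∏ a ∈ Icc 1 (dimv k n i), ∏ b ∈ Icc 1 (dimv k n (i + 1)),
      ∏ r ∈ range (cExp p r₀ q₀ s), (X (i, a) - C (Qvar ^ r) * X (i + 1, b))) *
  (∏ i ∈ Icc 1 k, ∏ r ∈ range (cExp p r₀ q₀ s),
      (C Zvar - C (Qvar ^ r) * X (k, i)) * (1 - C (Qvar ^ r) * X (n - k, i)))

/-- The Vandermonde factor `Δ(x)`. -/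
noncomputable def Vand (k n : ℕ) : MvPolynomial (ℕ × ℕ) Zq :=
  ∏ m ∈ Icc 1 (n - 1),
    ∏ ij ∈ ((Icc 1 (dimv k n m)) ×ˢ (Icc 1 (dimv k n m))).filter (fun ij => ij.1 < ij.2),
      (X (m, ij.2) - X (m, ij.1))

/-- `Φ_s = Δ · Φ̄_s`. -/
noncomputable def Phi (p r₀ q₀ k n s : ℕ) : MvPolynomial (ℕ × ℕ) Zq :=
  Vand k n * Phibar p r₀ q₀ k n s

/-- Exponent vector of the monomial `∏_{i,j} x_{i,j}^{j·p^s - 1}`. -/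
noncomputable def expVec (p k n s : ℕ) : (ℕ × ℕ) →₀ ℕ :=
  ∑ i ∈ Icc 1 (n - 1), ∑ j ∈ Icc 1 (dimv k n i), Finsupp.single (i, j) (j * p ^ s - 1)

/-- The truncation `T_s(z,q) ∈ ℤ[z,q]` of the K-theoretic vertex function of
`T*Gr(k,n)`: the coefficient of `∏ x_{i,j}^{j·p^s - 1}` in `Φ_s(x,z,q)`. -/
noncomputable def Ts (p r₀ q₀ k n s : ℕ) : Zq :=
  MvPolynomial.coeff (expVec p k n s) (Phi p r₀ q₀ k n s)

/-!
Each factor of `Φ_s` is a product of polynomials of degree at most one in every variable, so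
the degree of `Φ_s` in `x_{i,j}` is at most the number of factors involving `x_{i,j}`: `v_i - 1`
from `Δ`, `a_s` from the monomial, at most `2 v_i b_s` from the adjoint factors,
`(v_{i-1} + v_{i+1}) c_s` from the bifundamental ones and `([i = k] + [i = n - k]) c_s` from the
framing ones. For `2k ≤ n` the dimension vector satisfies
`v_{i-1} + v_{i+1} + [i = k] + [i = n - k] ≤ 2 v_i`, and since `a_s + c_s = p^s - 1` and
`2 (b_s + c_s) ≤ p^s - 1`, the count is at most `(v_i + 1) p^s - 2 - c_s`.
-/

section DegreeOf

variable {R σ ι : Type*} [CommRing R]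

lemma degreeOf_prod_le_of_le (w : σ) (s : Finset ι) (f : ι → MvPolynomial σ R) (d : ι → ℕ)
    (h : ∀ t ∈ s, degreeOf w (f t) ≤ d t) : degreeOf w (∏ t ∈ s, f t) ≤ ∑ t ∈ s, d t :=
  (degreeOf_prod_le w s f).trans (sum_le_sum h)

variable [Nontrivial R] [DecidableEq σ]

lemma degreeOf_X_sub_C_mul_X_le (w u v : σ) (c : R) :
    degreeOf w (X u - C c * X v) ≤ (if w = u then 1 else 0) + (if w = v then 1 else 0) := by
  rw [← degreeOf_X (R := R), ← degreeOf_X (R := R)]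
  exact (degreeOf_sub_le _ _ _).trans
    (max_le (le_add_right le_rfl) (le_add_left (degreeOf_C_mul_le _ _ _)))

lemma degreeOf_X_sub_X_le (w u v : σ) :
    degreeOf w (X u - X v : MvPolynomial σ R) ≤
      (if w = u then 1 else 0) + (if w = v then 1 else 0) := by
  simpa using degreeOf_X_sub_C_mul_X_le (R := R) w u v 1

lemma degreeOf_C_sub_C_mul_X_le (w u : σ) (c d : R) :
    degreeOf w (C d - C c * X u) ≤ if w = u then 1 else 0 := by
  rw [← degreeOf_X (R := R)]
  exact (degreeOf_sub_le _ _ _).trans (max_le (by simp) (degreeOf_C_mul_le _ _ _))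

end DegreeOf

lemma sum_filter_lt_ite_add_ite_le {α : Type*} [LinearOrder α] (s : Finset α) (j : α) :
    ∑ ab ∈ (s ×ˢ s).filter (fun ab => ab.1 < ab.2),
      ((if j = ab.2 then 1 else 0) + (if j = ab.1 then 1 else 0)) ≤ #s - 1 := by
  rw [sum_filter, sum_product]
  simp only [ite_add_zero, sum_add_distrib]
  rw [sum_comm (f := fun a b => if a < b then (if j = a then 1 else 0) else 0)]
  simp only [← ite_and, and_comm (a := _ < _)]
  simp only [ite_and, sum_ite_eq, ← sum_add_distrib]
  split_ifs with hj
  · have h : ∀ a ∈ s,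
        ((if a < j then 1 else 0) + if j < a then 1 else 0) = if a ≠ j then 1 else 0 :=
      fun a _ => by split_ifs <;> grind
    rw [sum_congr rfl h, sum_boole, filter_ne', card_erase_of_mem hj, Nat.cast_id]
  · simp

noncomputable def monomialFactor (k n a : ℕ) : MvPolynomial (ℕ × ℕ) Zq :=
  (∏ m ∈ Icc 1 (n - 1), ∏ j ∈ Icc 1 (dimv k n m), X (m, j)) ^ a

noncomputable def adjointFactor (k n b : ℕ) : MvPolynomial (ℕ × ℕ) Zq :=
  ∏ m ∈ Icc 1 (n - 1),
    ∏ ij ∈ ((Icc 1 (dimv k n m)) ×ˢ (Icc 1 (dimv k n m))).filter (fun ij => ij.1 ≠ ij.2),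
      ∏ r ∈ range b, (X (m, ij.1) - C (Qvar ^ r) * X (m, ij.2))

noncomputable def bifundamentalFactor (k n c : ℕ) : MvPolynomial (ℕ × ℕ) Zq :=
  ∏ i ∈ Icc 1 (n - 2), ∏ a ∈ Icc 1 (dimv k n i), ∏ b ∈ Icc 1 (dimv k n (i + 1)),
    ∏ r ∈ range c, (X (i, a) - C (Qvar ^ r) * X (i + 1, b))

noncomputable def framingFactor (k n c : ℕ) : MvPolynomial (ℕ × ℕ) Zq :=
  ∏ i ∈ Icc 1 k, ∏ r ∈ range c,
    (C Zvar - C (Qvar ^ r) * X (k, i)) * (1 - C (Qvar ^ r) * X (n - k, i))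

lemma Phibar_eq (p r₀ q₀ k n s : ℕ) :
    Phibar p r₀ q₀ k n s = monomialFactor k n (aExp p r₀ q₀ s) *
      adjointFactor k n (bExp p r₀ q₀ s) * bifundamentalFactor k n (cExp p r₀ q₀ s) *
      framingFactor k n (cExp p r₀ q₀ s) :=
  rfl

section Factors

variable (k n i j : ℕ)

lemma degreeOf_Vand_le : degreeOf (i, j) (Vand k n) ≤ dimv k n i - 1 := by
  refine (degreeOf_prod_le_of_le _ _ _ (fun m => if m = i then dimv k n i - 1 else 0)
    fun m _ => ?_).trans ?_
  · refine (degreeOf_prod_le_of_le _ _ _ _ fun ab _ => degreeOf_X_sub_X_le _ _ _).trans ?_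
    by_cases h : m = i
    · subst h
      simpa using sum_filter_lt_ite_add_ite_le (Icc 1 (dimv k n m)) j
    · simp [h, Ne.symm h]
  · rw [sum_ite_eq']
    split_ifs <;> simp

lemma degreeOf_monomialFactor_le (a : ℕ) : degreeOf (i, j) (monomialFactor k n a) ≤ a := by
  refine (degreeOf_pow_le _ _ _).trans (mul_le_of_le_one_right' ?_)
  refine (degreeOf_prod_le_of_le _ _ _ _ fun m _ =>
    degreeOf_prod_le_of_le _ _ _ _ fun j' _ => (degreeOf_X _ _).le).trans ?_
  simp only [Prod.mk.injEq, ite_and, sum_ite_irrel, sum_const_zero, sum_ite_eq]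
  split_ifs <;> simp

lemma degreeOf_adjointFactor_le (b : ℕ) :
    degreeOf (i, j) (adjointFactor k n b) ≤ 2 * dimv k n i * b := by
  refine (degreeOf_prod_le_of_le _ _ _ (fun m => if m = i then 2 * dimv k n i * b else 0)
    fun m _ => ?_).trans ?_
  · refine (degreeOf_prod_le_of_le _ _ _ (fun ab => ((if (i, j) = (m, ab.1) then 1 else 0) +
      (if (i, j) = (m, ab.2) then 1 else 0)) * b) fun ab _ => ?_).trans ?_
    · refine (degreeOf_prod_le_of_le _ _ _ _ fun r _ => degreeOf_X_sub_C_mul_X_le _ _ _ _).trans ?_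
      simp [mul_comm]
    by_cases h : m = i
    · subst h
      rw [if_pos rfl, ← sum_mul]
      refine Nat.mul_le_mul_right _
        ((sum_le_sum_of_subset (filter_subset (fun ab : ℕ × ℕ => ab.1 ≠ ab.2) _)).trans ?_)
      rw [sum_product]
      simp [sum_add_distrib]
      split_ifs <;> omega
    · simp [h, Ne.symm h]
  · rw [sum_ite_eq']
    split_ifs <;> simp

lemma degreeOf_bifundamentalFactor_le (c : ℕ) :
    degreeOf (i, j) (bifundamentalFactor k n c) ≤ (dimv k n (i - 1) + dimv k n (i + 1)) * c := by
  refine (degreeOf_prod_le_of_le _ _ _ (fun t => (if t = i then dimv k n (i + 1) * c else 0) +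
    (if t = i - 1 then dimv k n (i - 1) * c else 0)) fun t _ => ?_).trans ?_
  · refine (degreeOf_prod_le_of_le _ _ _ _ fun a _ => degreeOf_prod_le_of_le _ _ _ _ fun b _ =>
      degreeOf_prod_le_of_le _ _ _ _ fun r _ => degreeOf_X_sub_C_mul_X_le _ _ _ _).trans ?_
    simp only [sum_const, card_range, smul_eq_mul, Prod.mk.injEq, ite_and]
    by_cases h1 : i = t <;> by_cases h2 : i = t + 1 <;> simp [h1, h2] <;> split_ifs <;> omega
  · rw [sum_add_distrib, sum_ite_eq', sum_ite_eq', add_mul]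
    split_ifs <;> omega

lemma degreeOf_framingFactor_le (c : ℕ) :
    degreeOf (i, j) (framingFactor k n c) ≤
      ((if i = k then 1 else 0) + (if i = n - k then 1 else 0)) * c := by
  refine (degreeOf_prod_le_of_le _ _ _ _ fun t _ => degreeOf_prod_le_of_le _ _ _ _ fun r _ =>
    (degreeOf_mul_le _ _ _).trans (add_le_add (degreeOf_C_sub_C_mul_X_le _ _ _ _)
      (by simpa using degreeOf_C_sub_C_mul_X_le (i, j) (n - k, t) (Qvar ^ r) 1))).trans ?_
  simp [Prod.mk.injEq, ite_and, mul_add, sum_add_distrib]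
  split_ifs <;> omega

end Factors

lemma two_mul_cExp_le (p r₀ q₀ s : ℕ) (hω : 2 * r₀ ≤ q₀) : 2 * cExp p r₀ q₀ s ≤ p ^ s - 1 := by
  rcases Nat.eq_zero_or_pos q₀ with rfl | hq₀
  · simp [cExp]
  · have h := Nat.div_mul_le_self ((p ^ s - 1) * r₀) q₀
    refine Nat.le_of_mul_le_mul_right ?_ hq₀
    unfold cExp
    nlinarith

lemma dimv_neighbors_add_framing_le (k n i : ℕ) (hn : 2 * k ≤ n) (hi : 1 ≤ dimv k n i) :
    dimv k n (i - 1) + dimv k n (i + 1) + ((if i = k then 1 else 0) + (if i = n - k then 1 else 0))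
      ≤ 2 * dimv k n i := by
  unfold dimv at *
  split_ifs <;> omega

lemma sub_one_add_add_two_mul_add_two_mul_lt (v P a b c : ℕ) (hv : 1 ≤ v) (ha : a < P)
    (hbc : 2 * (b + c) < P) :
    v - 1 + a + 2 * v * b + 2 * v * c < (v + 1) * P - 1 := by
  have h := Nat.mul_le_mul_left v hbc
  have : v + a + 2 * v * b + 2 * v * c < (v + 1) * P := by nlinarith
  omega

lemma degreeOf_Phi_le (p r₀ q₀ k n s i j : ℕ) :
    degreeOf (i, j) (Phi p r₀ q₀ k n s) ≤
      dimv k n i - 1 + aExp p r₀ q₀ s + 2 * dimv k n i * bExp p r₀ q₀ s +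
        (dimv k n (i - 1) + dimv k n (i + 1) +
          ((if i = k then 1 else 0) + (if i = n - k then 1 else 0))) * cExp p r₀ q₀ s := by
  rw [Phi, Phibar_eq]
  grw [degreeOf_mul_le, degreeOf_mul_le, degreeOf_mul_le, degreeOf_mul_le, degreeOf_Vand_le,
    degreeOf_monomialFactor_le, degreeOf_adjointFactor_le, degreeOf_bifundamentalFactor_le,
    degreeOf_framingFactor_le]
  linarith

theorem degree_bound_general (p r₀ q₀ k n : ℕ) (hp : p.Prime) (hω : 2 * r₀ ≤ q₀)
    (hn : 2 * k ≤ n) (s : ℕ) (i j : ℕ) (hj1 : 1 ≤ j) (hj2 : j ≤ dimv k n i) :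
    MvPolynomial.degreeOf (i, j) (Phi p r₀ q₀ k n s) < (dimv k n i + 1) * p ^ s - 1 := by
  have hv : 1 ≤ dimv k n i := hj1.trans hj2
  have hP : 1 ≤ p ^ s := Nat.one_le_pow _ _ hp.pos
  have hc := two_mul_cExp_le p r₀ q₀ s hω
  have hb : 2 * bExp p r₀ q₀ s ≤ p ^ s - 1 - 2 * cExp p r₀ q₀ s := Nat.mul_div_le _ 2
  calc degreeOf (i, j) (Phi p r₀ q₀ k n s)
      ≤ dimv k n i - 1 + aExp p r₀ q₀ s + 2 * dimv k n i * bExp p r₀ q₀ s +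
          2 * dimv k n i * cExp p r₀ q₀ s := by
        grw [degreeOf_Phi_le, dimv_neighbors_add_framing_le k n i hn hv]
    _ < (dimv k n i + 1) * p ^ s - 1 :=
        sub_one_add_add_two_mul_add_two_mul_lt _ _ _ _ _ hv (by unfold aExp; omega) (by omega)

/-- Degree bound: for every `s ≥ 0` and variable `x_{i,j}` with `1 ≤ i ≤ n-1`,
`1 ≤ j ≤ v_i`, the degree of `Φ_s` in `x_{i,j}` is `< (v_i + 1)·p^s - 1`. -/
theorem degree_bound (p r₀ q₀ k n : ℕ) (hp : p.Prime) (hodd : Odd p)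
    (hr₀ : 0 < r₀) (hq₀ : 0 < q₀) (hω : 2 * r₀ ≤ q₀) (hcong : p ≡ 1 [MOD q₀])
    (hk : 1 ≤ k) (hn : 2 * k ≤ n) (s : ℕ) (i j : ℕ)
    (hi1 : 1 ≤ i) (hi2 : i ≤ n - 1) (hj1 : 1 ≤ j) (hj2 : j ≤ dimv k n i) :
    MvPolynomial.degreeOf (i, j) (Phi p r₀ q₀ k n s) < (dimv k n i + 1) * p ^ s - 1 :=
  degree_bound_general p r₀ q₀ k n hp hω hn s i j hj1 hj2
end

section
/- Let 1 ≤ l ≤ s and let ζ ∈ ℂ be a primitive p^l-th root of unity. Then, evaluating q at ζ, the polynomial identity Φ_{s+1}(x, z, ζ) · Φ_{s−1}(x^p, z^p, ζ^p) = Φ_s(x, z, ζ) · Φ_s(x^p, z^p, ζ^p) holds in ℂ[x, z], where x^p denotes the substitution replacing every variable x_{i,j} by x_{i,j}^p. -/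
/-!
Since `p ≡ 1 [MOD q₀]` and `p` is odd, each of `a_s, b_s, c_s` is `w · S_s` for a fixed `w`, where
`S_s = 1 + p + ⋯ + p^(s-1)`. So every factor of `Φ̄_s` is a power `u^(w S_s)` or a product
`∏_{r < w S_s} (x - q^r y)` with `x, y` free of `q`, while `Δ` does not depend on `s`.
Passing from `S_s` to `S_{s+1}` adds `w p^s = w p^(s-l) · p^l` factors, i.e. whole periods of `ζ`,
which contribute `(x^(p^l) - y^(p^l))^(w p^(s-l))`; on the side of `(x^p, y^p, ζ^p)`, passing from
`S_{s-1}` to `S_s` adds `w p^(s-1)` factors, whole periods of the primitive `p^(l-1)`-th root `ζ^p`,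
and contributes the same power. Hence each factor, and so `Φ_s`, satisfies the cross identity.
-/

open MvPolynomial Finset

/-- The substitution `ℤ[x,z,q] → ℂ[x,z]` sending `q ↦ ζ`, `z ↦ z^e`, and every
variable `x_{i,j} ↦ x_{i,j}^e`. -/
noncomputable def substC (ζ : ℂ) (e : ℕ) :
    MvPolynomial (ℕ × ℕ) Zq →+* MvPolynomial (ℕ × ℕ) (Polynomial ℂ) :=
  MvPolynomial.eval₂Hom
    ((MvPolynomial.C : Polynomial ℂ →+* MvPolynomial (ℕ × ℕ) (Polynomial ℂ)).comp
      (MvPolynomial.eval₂Hom (Int.castRingHom (Polynomial ℂ))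
        (fun b => bif b then Polynomial.C ζ else Polynomial.X ^ e)))
    (fun ij => MvPolynomial.X ij ^ e)

namespace IsPrimitiveRoot

variable {R : Type*} [CommRing R] [IsDomain R] {ζ : R} {N : ℕ}

theorem prod_range_sub_pow_mul (hN : 0 < N) (hζ : IsPrimitiveRoot ζ N) (x y : R) :
    ∏ i ∈ range N, (x - ζ ^ i * y) = x ^ N - y ^ N := by
  classical
  have : NeZero N := ⟨hN.ne'⟩
  have himage : (range N).image (ζ ^ ·) = Polynomial.nthRootsFinset N (1 : R) := by
    ext μ
    rw [Polynomial.mem_nthRootsFinset hN, mem_image]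
    constructor
    · rintro ⟨i, -, rfl⟩
      rw [← pow_mul, mul_comm, pow_mul, hζ.pow_eq_one, one_pow]
    · intro hμ
      obtain ⟨i, hi, rfl⟩ := hζ.eq_pow_of_pow_eq_one hμ
      exact ⟨i, mem_range.2 hi, rfl⟩
  rw [hζ.pow_sub_pow_eq_prod_sub_mul x y hN, ← himage, prod_image hζ.injOn_pow]

theorem prod_range_add_mul_sub_pow_mul (hN : 0 < N) (hζ : IsPrimitiveRoot ζ N) (x y : R)
    (m t : ℕ) :
    ∏ i ∈ range (m + t * N), (x - ζ ^ i * y) =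
      (∏ i ∈ range m, (x - ζ ^ i * y)) * (x ^ N - y ^ N) ^ t := by
  induction t with
  | zero => simp
  | succ t ih =>
    have hperiod : ∏ i ∈ range N, (x - ζ ^ (m + t * N + i) * y) = x ^ N - y ^ N := by
      simp_rw [pow_add ζ (m + t * N), mul_comm (ζ ^ (m + t * N)), mul_assoc]
      rw [hζ.prod_range_sub_pow_mul hN, mul_pow, ← pow_mul, mul_comm (m + t * N), pow_mul,
        hζ.pow_eq_one, one_pow, one_mul]
    rw [add_mul, one_mul, ← add_assoc, prod_range_add, ih, hperiod, pow_succ, mul_assoc]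

theorem prod_range_sub_pow_mul_cross {p : ℕ} (hp : 0 < p) (hN : 0 < N)
    (hζ : IsPrimitiveRoot ζ (p * N)) (x y : R) {m₀ m₁ m₂ t : ℕ}
    (h₂ : m₂ = m₁ + t * (p * N)) (h₁ : m₁ = m₀ + t * N) :
    (∏ i ∈ range m₂, (x - ζ ^ i * y)) * ∏ i ∈ range m₀, (x ^ p - (ζ ^ p) ^ i * y ^ p) =
      (∏ i ∈ range m₁, (x - ζ ^ i * y)) * ∏ i ∈ range m₁, (x ^ p - (ζ ^ p) ^ i * y ^ p) := by
  have hζp : IsPrimitiveRoot (ζ ^ p) N := hζ.pow (Nat.mul_pos hp hN) rfl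
  subst h₂ h₁
  rw [hζ.prod_range_add_mul_sub_pow_mul (Nat.mul_pos hp hN),
    hζp.prod_range_add_mul_sub_pow_mul hN (x ^ p), ← pow_mul, ← pow_mul]
  ring

end IsPrimitiveRoot

section Exponents

variable {p r₀ q₀ : ℕ}

theorem cExp_eq (hp : 1 ≤ p) (hq : q₀ ∣ p - 1) (s : ℕ) :
    cExp p r₀ q₀ s = (p - 1) * r₀ / q₀ * ∑ j ∈ range s, p ^ j := by
  rw [cExp, ← geom_sum_mul_of_one_le hp, Nat.div_mul_right_comm (dvd_mul_of_dvd_left hq r₀)]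
  ring_nf

theorem aExp_eq (hp : 1 ≤ p) (hq : q₀ ∣ p - 1) (s : ℕ) :
    aExp p r₀ q₀ s = (p - 1 - (p - 1) * r₀ / q₀) * ∑ j ∈ range s, p ^ j := by
  rw [aExp, cExp_eq hp hq, ← geom_sum_mul_of_one_le hp, Nat.sub_mul _ _ (∑ j ∈ range s, p ^ j),
    mul_comm]

theorem bExp_eq (hp : Odd p) (hq : q₀ ∣ p - 1) (s : ℕ) :
    bExp p r₀ q₀ s = (p - 1 - 2 * ((p - 1) * r₀ / q₀)) / 2 * ∑ j ∈ range s, p ^ j := by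
  have heven : 2 ∣ p - 1 - 2 * ((p - 1) * r₀ / q₀) := by
    obtain ⟨t, rfl⟩ := hp
    generalize (2 * t + 1 - 1) * r₀ / q₀ = c
    omega
  rw [bExp, cExp_eq hp.pos hq, ← geom_sum_mul_of_one_le hp.pos, ← mul_assoc,
    mul_comm _ (p - 1), ← Nat.sub_mul, Nat.div_mul_right_comm heven]

end Exponents

section Substitution

variable (ζ : ℂ) (e : ℕ)

theorem substC_X (ij : ℕ × ℕ) : substC ζ e (X ij) = X ij ^ e := by
  simp [substC]

theorem substC_C_Qvar : substC ζ e (C Qvar) = C (Polynomial.C ζ) := by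
  simp [substC, Qvar]

theorem substC_C_Zvar : substC ζ e (C Zvar) = C Polynomial.X ^ e := by
  simp [substC, Zvar]

end Substitution

def HasCrossIdentity (ζ : ℂ) (p s : ℕ) (φ : ℕ → MvPolynomial (ℕ × ℕ) Zq) : Prop :=
  substC ζ 1 (φ (s + 1)) * substC (ζ ^ p) p (φ (s - 1)) =
    substC ζ 1 (φ s) * substC (ζ ^ p) p (φ s)

namespace HasCrossIdentity

variable {ζ : ℂ} {p l s : ℕ}

theorem const (c : MvPolynomial (ℕ × ℕ) Zq) : HasCrossIdentity ζ p s fun _ => c :=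
  rfl

theorem mul {φ ψ : ℕ → MvPolynomial (ℕ × ℕ) Zq} (hφ : HasCrossIdentity ζ p s φ)
    (hψ : HasCrossIdentity ζ p s ψ) : HasCrossIdentity ζ p s fun s => φ s * ψ s := by
  unfold HasCrossIdentity at *
  rw [map_mul, map_mul, mul_mul_mul_comm, hφ, hψ, map_mul, map_mul, mul_mul_mul_comm]

theorem prod {ι : Type*} {t : Finset ι} {φ : ι → ℕ → MvPolynomial (ℕ × ℕ) Zq}
    (h : ∀ i ∈ t, HasCrossIdentity ζ p s (φ i)) :
    HasCrossIdentity ζ p s fun s => ∏ i ∈ t, φ i s := by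
  simp only [HasCrossIdentity, map_prod, ← prod_mul_distrib]
  exact prod_congr rfl h

theorem pow_geom (hs : 1 ≤ s) {u : MvPolynomial (ℕ × ℕ) Zq}
    {x : MvPolynomial (ℕ × ℕ) (Polynomial ℂ)} (hu : ∀ ζ' e, substC ζ' e u = x ^ e)
    {E : ℕ → ℕ} {w : ℕ} (hE : ∀ s, E s = w * ∑ j ∈ range s, p ^ j) :
    HasCrossIdentity ζ p s fun s => u ^ E s := by
  simp only [HasCrossIdentity, map_pow, hu, pow_one, ← pow_mul, ← pow_add, hE]
  obtain ⟨s, rfl⟩ : ∃ s', s = s' + 1 := ⟨s - 1, by omega⟩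
  simp only [Nat.add_sub_cancel, geom_sum_succ]
  ring

theorem prod_range_sub_geom (hp : 0 < p) (hl : 1 ≤ l) (hls : l ≤ s)
    (hζ : IsPrimitiveRoot ζ (p ^ l)) {u v : MvPolynomial (ℕ × ℕ) Zq}
    {x y : MvPolynomial (ℕ × ℕ) (Polynomial ℂ)} (hu : ∀ ζ' e, substC ζ' e u = x ^ e)
    (hv : ∀ ζ' e, substC ζ' e v = y ^ e) {E : ℕ → ℕ} {w : ℕ}
    (hE : ∀ s, E s = w * ∑ j ∈ range s, p ^ j) :
    HasCrossIdentity ζ p s fun s => ∏ r ∈ range (E s), (u - C (Qvar ^ r) * v) := by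
  obtain ⟨l, rfl⟩ : ∃ l', l = l' + 1 := ⟨l - 1, by omega⟩
  obtain ⟨s, rfl⟩ : ∃ s', s = s' + 1 := ⟨s - 1, by omega⟩
  have hξ : IsPrimitiveRoot (C (Polynomial.C ζ) : MvPolynomial (ℕ × ℕ) (Polynomial ℂ))
      (p * p ^ l) := by
    rw [← pow_succ']
    exact hζ.map_of_injective (f := (C : Polynomial ℂ →+* _).comp Polynomial.C)
      ((C_injective _ _).comp Polynomial.C_injective)
  have hsucc : E (s + 1 + 1) = E (s + 1) + w * p ^ (s - l) * (p * p ^ l) := by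
    rw [hE, hE, sum_range_succ, mul_add, mul_assoc, ← pow_succ', ← pow_add,
      show s - l + (l + 1) = s + 1 by omega]
  have hself : E (s + 1) = E s + w * p ^ (s - l) * p ^ l := by
    rw [hE, hE, sum_range_succ, mul_add, mul_assoc, ← pow_add, show s - l + l = s by omega]
  simp only [HasCrossIdentity, map_prod, map_sub, map_mul, map_pow, hu, hv, substC_C_Qvar,
    pow_one, Nat.add_sub_cancel]
  exact hξ.prod_range_sub_pow_mul_cross hp (pow_pos hp l) x y hsucc hself

end HasCrossIdentity

theorem hasCrossIdentity_phibar {p r₀ q₀ l s : ℕ} {ζ : ℂ} (k n : ℕ) (hodd : Odd p)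
    (hq : q₀ ∣ p - 1) (hl : 1 ≤ l) (hls : l ≤ s) (hζ : IsPrimitiveRoot ζ (p ^ l)) :
    HasCrossIdentity ζ p s (Phibar p r₀ q₀ k n) := by
  have hX (ij : ℕ × ℕ) : ∀ ζ' e, substC ζ' e (X ij) = X ij ^ e :=
    fun ζ' e => substC_X ζ' e ij
  have hmonomial : ∀ ζ' e, substC ζ' e (∏ m ∈ Icc 1 (n - 1), ∏ j ∈ Icc 1 (dimv k n m), X (m, j)) =
      (∏ m ∈ Icc 1 (n - 1), ∏ j ∈ Icc 1 (dimv k n m), X (m, j)) ^ e := by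
    intro ζ' e
    simp only [map_prod, substC_X, prod_pow]
  have hlin := @HasCrossIdentity.prod_range_sub_geom ζ p l s hodd.pos hl hls hζ
  have hc := cExp_eq (r₀ := r₀) hodd.pos hq
  unfold Phibar
  refine .mul (.mul (.mul ?_ ?_) ?_) ?_
  · exact .pow_geom (hl.trans hls) hmonomial (aExp_eq hodd.pos hq)
  · exact .prod fun m _ => .prod fun ij _ => hlin (hX _) (hX _) (bExp_eq hodd hq)
  · exact .prod fun i _ => .prod fun a _ => .prod fun b _ => hlin (hX _) (hX _) hc
  · refine .prod fun i _ => ?_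
    simp only [prod_mul_distrib]
    exact (hlin substC_C_Zvar (hX _) hc).mul
      (hlin (fun _ _ => by rw [map_one, one_pow]) (hX _) hc)

theorem phi_cross_identity_general (p r₀ q₀ k n : ℕ) (hodd : Odd p) (hcong : p ≡ 1 [MOD q₀])
    (l s : ℕ) (hl : 1 ≤ l) (hls : l ≤ s)
    (ζ : ℂ) (hζ : IsPrimitiveRoot ζ (p ^ l)) :
    substC ζ 1 (Phi p r₀ q₀ k n (s + 1)) * substC (ζ ^ p) p (Phi p r₀ q₀ k n (s - 1)) =
      substC ζ 1 (Phi p r₀ q₀ k n s) * substC (ζ ^ p) p (Phi p r₀ q₀ k n s) :=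
  have hq : q₀ ∣ p - 1 := (Nat.modEq_iff_dvd' hodd.pos).1 hcong.symm
  (HasCrossIdentity.const (Vand k n)).mul (hasCrossIdentity_phibar k n hodd hq hl hls hζ)

/-- At a primitive `p^l`-th root of unity `ζ` (with `1 ≤ l ≤ s`):
`Φ_{s+1}(x,z,ζ)·Φ_{s-1}(x^p,z^p,ζ^p) = Φ_s(x,z,ζ)·Φ_s(x^p,z^p,ζ^p)` in `ℂ[x,z]`. -/
theorem phi_cross_identity (p r₀ q₀ k n : ℕ) (hp : p.Prime) (hodd : Odd p)
    (hr₀ : 0 < r₀) (hq₀ : 0 < q₀) (hω : 2 * r₀ ≤ q₀) (hcong : p ≡ 1 [MOD q₀])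
    (hk : 1 ≤ k) (hn : 2 * k ≤ n) (l s : ℕ) (hl : 1 ≤ l) (hls : l ≤ s)
    (ζ : ℂ) (hζ : IsPrimitiveRoot ζ (p ^ l)) :
    substC ζ 1 (Phi p r₀ q₀ k n (s + 1)) * substC (ζ ^ p) p (Phi p r₀ q₀ k n (s - 1)) =
      substC ζ 1 (Phi p r₀ q₀ k n s) * substC (ζ ^ p) p (Phi p r₀ q₀ k n s) :=
  phi_cross_identity_general p r₀ q₀ k n hodd hcong l s hl hls ζ hζ
end
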